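/- Let f be in the class C and let A, C₀ > 0 be given. Then there is a constant K (depending only on A, C₀ and f) such that for all x ≥ 2 and all s ∈ ℂ with |Re s| ≤ C₀: |Σ_{p ≤ x} e^{s·f(p)} − π(x)·Ψ̂_f(s)| ≤ K·π(x)·(1 + |Im s|)·(log x)^{−2A}, where the sum is over primes p ≤ x and π is the prime-counting function. -/

import Mathlib

/-!
Both `Σ_{p ≤ x} e^{s f(p)}` and `π(x) Ψ̂(s)` are integrals of `t ↦ e^{st}` against measures on
`[0, ∞)` of total mass `π(x)`: the image `μ` of counting measure on the primes `p ≤ x` under `f`,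
and `ν = π(x) dΨ`. Fubini applied to `1_{0 < u < t} e^{su}` gives the layer-cake identity
`∫ e^{st} dμ = μ(ℝ) + s ∫_0^∞ μ(u, ∞) e^{su} du`, so the difference of the two sums is
`s ∫_0^∞ (ν(-∞, u] - μ(-∞, u]) e^{su} du`. By (ii) the integrand is `O(π(x) (log x)^{-k} e^{C₀u})`,
and by (i) both tails are `O(π(x) e^{-(C₀+1)u})`. Cutting at `T = 2A loglog x` and taking
`k = 2AC₀ + 2A + 1` bounds both pieces by `π(x) (log x)^{-2A}`, and `|s| ≤ (C₀+1)(1 + |Im s|)`.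
-/

open MeasureTheory Filter

noncomputable section

/-- A strongly additive arithmetic function: `f (m * n) = f m + f n` for coprime `m, n`,
and `f (p ^ k) = f p` for every prime `p` and `k ≥ 1`. -/
def StronglyAdditive (f : ℕ → ℝ) : Prop :=
  (∀ m n : ℕ, Nat.Coprime m n → f (m * n) = f m + f n) ∧
    (∀ p k : ℕ, p.Prime → 1 ≤ k → f (p ^ k) = f p)

/-- The finset of primes `p ≤ x`. -/
def primesBelow (x : ℝ) : Finset ℕ :=
  (Finset.range (⌊x⌋₊ + 1)).filter Nat.Prime

/-- `μ(f;x) = Σ_{p ≤ x} f(p)/p`. -/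
def muf (f : ℕ → ℝ) (x : ℝ) : ℝ := ∑ p ∈ primesBelow x, f p / p

/-- `σ²(f;x) = Σ_{p ≤ x} (f(p)²/p)(1 − 1/p)`. -/
def sigma2 (f : ℕ → ℝ) (x : ℝ) : ℝ :=
  ∑ p ∈ primesBelow x, f p ^ 2 / p * (1 - 1 / p)

/-- `σ(f;x)`. -/
def sigmaf (f : ℕ → ℝ) (x : ℝ) : ℝ := Real.sqrt (sigma2 f x)

/-- `D_f(x;Δ) = (1/x)·#{n ≤ x : f(n) ≥ μ(f;x) + Δ·σ(f;x)}`. -/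
def Df (f : ℕ → ℝ) (x Δ : ℝ) : ℝ :=
  (((Finset.Icc 1 ⌊x⌋₊).filter fun n => muf f x + Δ * sigmaf f x ≤ f n).card : ℝ) / x

/-- A (right-continuous, nondecreasing) Stieltjes function is a distribution function if it
tends to `0` at `−∞` and to `1` at `+∞`. -/
def IsDistributionFunction (Ψ : StieltjesFunction ℝ) : Prop :=
  Tendsto (fun t => Ψ t) atBot (nhds (0 : ℝ)) ∧ Tendsto (fun t => Ψ t) atTop (nhds (1 : ℝ))

/-- `loglog x`. -/
def loglog (x : ℝ) : ℝ := Real.log (Real.log x)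

/-- Membership in the class `𝒞`, with associated distribution function `Ψ` (denoted `Ψ_f`). -/
structure InClassC (f : ℕ → ℝ) (Ψ : StieltjesFunction ℝ) : Prop where
  strongAdd : StronglyAdditive f
  pos : ∀ p : ℕ, p.Prime → 0 < f p
  tail : ∀ A : ℝ, 0 < A → ∃ c : ℝ, 0 < c ∧ ∀ x : ℝ, 2 ≤ x → ∀ t : ℝ, 0 ≤ t →
    (((primesBelow x).filter fun p => t ≤ f p).card : ℝ) ≤
      c * Real.exp (-A * t) * ((primesBelow x).card : ℝ)
  distrib : IsDistributionFunction Ψ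
  secondMoment : 0 < ∫ t, t ^ 2 ∂Ψ.measure
  approx : ∀ k : ℝ, 0 < k → ∃ c : ℝ, 0 < c ∧ ∀ x : ℝ, 2 ≤ x → ∀ t : ℝ,
    |(((primesBelow x).filter fun p => f p ≤ t).card : ℝ) / ((primesBelow x).card : ℝ) - Ψ t|
      ≤ c * Real.log x ^ (-k)

/-- `Ψ̂(v) = ∫ e^{vt} dΨ(t)` (real argument). -/
def psiHat (Ψ : StieltjesFunction ℝ) (v : ℝ) : ℝ := ∫ t, Real.exp (v * t) ∂Ψ.measure

/-- `Ψ̂′(v) = ∫ t·e^{vt} dΨ(t)`. -/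
def psiHatD (Ψ : StieltjesFunction ℝ) (v : ℝ) : ℝ := ∫ t, t * Real.exp (v * t) ∂Ψ.measure

/-- `Ψ̂″(v) = ∫ t²·e^{vt} dΨ(t)`. -/
def psiHatDD (Ψ : StieltjesFunction ℝ) (v : ℝ) : ℝ := ∫ t, t ^ 2 * Real.exp (v * t) ∂Ψ.measure

/-- `v` is the saddle point `v_f(x;Δ)`: the (unique) positive solution of
`Ψ̂′(v)·loglog x = Ψ̂′(0)·loglog x + Δ·(Ψ̂″(0)·loglog x)^{1/2}`. -/
def IsSaddle (Ψ : StieltjesFunction ℝ) (x Δ v : ℝ) : Prop :=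
  0 < v ∧ psiHatD Ψ v * loglog x =
    psiHatD Ψ 0 * loglog x + Δ * Real.sqrt (psiHatDD Ψ 0 * loglog x)

/-- `S_f(x;Δ)` expressed in terms of `v = v_f(x;Δ)`. -/
def Sf (Ψ : StieltjesFunction ℝ) (x v : ℝ) : ℝ :=
  Real.log x ^ (psiHat Ψ v - 1 - v * psiHatD Ψ v) /
    (v * Real.sqrt (2 * Real.pi * psiHatDD Ψ v * loglog x))

/-- `Ψ̂(s) = ∫ e^{st} dΨ(t)` for complex `s`. -/
def psiHatC (Ψ : StieltjesFunction ℝ) (s : ℂ) : ℂ :=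
  ∫ t : ℝ, Complex.exp (s * (t : ℂ)) ∂Ψ.measure

/-- `L(f;z) = ∏_p (1 − 1/p)^{Ψ̂(z)}·(1 + e^{z·f(p)}/(p − 1))`, over all primes (complex `z`). -/
def Lc (f : ℕ → ℝ) (Ψ : StieltjesFunction ℝ) (z : ℂ) : ℂ :=
  ∏' p : {p : ℕ // p.Prime},
    (1 - 1 / (p.1 : ℂ)) ^ psiHatC Ψ z *
      (1 + Complex.exp (z * (f p.1 : ℂ)) / ((p.1 : ℂ) - 1))

open Set
open scoped Complex NNReal

theorem norm_smul_cexp_mul (r : ℝ) (s : ℂ) (u : ℝ) :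
    ‖r • cexp (s * u)‖ = Real.exp (s.re * u) * |r| := by
  rw [norm_smul, Complex.norm_exp, Complex.re_mul_ofReal, Real.norm_eq_abs, mul_comm]

theorem cexp_mul_sub_one_eq_mul_intervalIntegral (s : ℂ) (a : ℝ) :
    cexp (s * a) - 1 = s * ∫ u in (0 : ℝ)..a, cexp (s * u) := by
  rcases eq_or_ne s 0 with rfl | hs
  · simp
  · rw [integral_exp_mul_complex hs]
    field_simp
    simp

theorem integral_cexp_mul_eq_measureReal_univ_add {μ : Measure ℝ} [IsFiniteMeasure μ]
    (hμ : ∀ᵐ t ∂μ, 0 ≤ t) {s : ℂ}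
    (hint : IntegrableOn (fun u : ℝ => μ.real (Ioi u) • cexp (s * u)) (Ioi 0)) :
    ∫ t, cexp (s * t) ∂μ = μ.real univ + s * ∫ u in Ioi 0, μ.real (Ioi u) • cexp (s * u) := by
  set F : ℝ × ℝ → ℂ := {q | q.1 < q.2}.indicator fun q => cexp (s * q.1)
  have hF_t : ∀ u, (fun t => F (u, t)) = (Ioi u).indicator fun _ => cexp (s * u) := by
    intro u; ext t; simp [F, indicator_apply]
  have hF_u : ∀ t, (fun u => F (u, t)) = (Iio t).indicator fun u => cexp (s * u) := by
    intro t; ext u; simp [F, indicator_apply]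
  have hF_int_t : ∀ u, ∫ t, F (u, t) ∂μ = μ.real (Ioi u) • cexp (s * u) := fun u => by
    rw [hF_t, integral_indicator_const _ measurableSet_Ioi]
  have hF_int_u : ∀ t, 0 ≤ t → ∫ u in Ioi 0, F (u, t) = ∫ u in (0 : ℝ)..t, cexp (s * u) := by
    intro t ht
    rw [hF_u, setIntegral_indicator measurableSet_Iio, Ioi_inter_Iio,
      ← integral_Ioc_eq_integral_Ioo, intervalIntegral.integral_of_le ht]
  have hF_int : Integrable F ((volume.restrict (Ioi 0)).prod μ) := by
    have hF_meas : AEStronglyMeasurable F ((volume.restrict (Ioi 0)).prod μ) :=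
      (Measurable.indicator (by fun_prop)
        (measurableSet_lt measurable_fst measurable_snd)).aestronglyMeasurable
    refine (integrable_prod_iff hF_meas).mpr ⟨ae_of_all _ fun u => ?_, ?_⟩
    · rw [hF_t]
      exact (integrable_const _).indicator measurableSet_Ioi
    · refine hint.norm.congr (ae_of_all _ fun u => ?_)
      have hnorm : ∀ t, ‖F (u, t)‖ = (Ioi u).indicator (fun _ => ‖cexp (s * u)‖) t := fun t => by
        rw [← norm_indicator_eq_indicator_norm, ← hF_t]
      simp only [hnorm]
      rw [integral_indicator_const _ measurableSet_Ioi, norm_smul,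
        Real.norm_of_nonneg measureReal_nonneg, smul_eq_mul]
  calc ∫ t, cexp (s * t) ∂μ = ∫ t, (1 + s * ∫ u in Ioi 0, F (u, t)) ∂μ := by
        refine integral_congr_ae (hμ.mono fun t ht => ?_)
        dsimp only
        rw [hF_int_u t ht, ← cexp_mul_sub_one_eq_mul_intervalIntegral]
        ring
    _ = μ.real univ + s * ∫ u in Ioi 0, ∫ t, F (u, t) ∂μ := by
        rw [integral_add (integrable_const _) (hF_int.integral_prod_right.const_mul s),
          integral_const_mul, integral_const, Complex.real_smul, mul_one,
          integral_integral_swap (f := fun u t => F (u, t)) hF_int]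
    _ = μ.real univ + s * ∫ u in Ioi 0, μ.real (Ioi u) • cexp (s * u) := by
        simp only [hF_int_t]

theorem integrableOn_measureReal_Ioi_smul_cexp {μ : Measure ℝ} [IsFiniteMeasure μ] {s : ℂ}
    {B : ℝ} (hB : ∀ u ∈ Ioi (0 : ℝ), Real.exp (s.re * u) * μ.real (Ioi u) ≤ B * Real.exp (-u)) :
    IntegrableOn (fun u : ℝ => μ.real (Ioi u) • cexp (s * u)) (Ioi 0) := by
  have hmeas : Measurable fun u : ℝ => μ.real (Ioi u) :=
    Antitone.measurable fun u v huv => measureReal_mono (Ioi_subset_Ioi huv)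
  have hexp : IntegrableOn (fun u : ℝ => Real.exp (-u)) (Ioi 0) := by
    simpa using exp_neg_integrableOn_Ioi 0 one_pos
  refine Integrable.mono' (hexp.const_mul B) (hmeas.smul (by fun_prop)).aestronglyMeasurable
    ((ae_restrict_mem measurableSet_Ioi).mono fun u hu => ?_)
  rw [norm_smul_cexp_mul, abs_of_nonneg measureReal_nonneg]
  exact hB u hu

theorem setIntegral_Ioi_le_of_le_of_le_mul_exp_neg {h : ℝ → ℝ} (hint : IntegrableOn h (Ioi 0))
    {T E B : ℝ} (hT : 0 ≤ T) (hE : ∀ u ∈ Ioc 0 T, h u ≤ E)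
    (hB : ∀ u ∈ Ioi T, h u ≤ B * Real.exp (-u)) :
    ∫ u in Ioi 0, h u ≤ T * E + B * Real.exp (-T) := by
  have hexp : IntegrableOn (fun u : ℝ => Real.exp (-u)) (Ioi T) := by
    simpa using exp_neg_integrableOn_Ioi T one_pos
  rw [← Ioc_union_Ioi_eq_Ioi hT, setIntegral_union (Ioc_disjoint_Ioi le_rfl) measurableSet_Ioi
    (hint.mono_set Ioc_subset_Ioi_self) (hint.mono_set (Ioi_subset_Ioi hT))]
  gcongr
  · calc ∫ u in Ioc 0 T, h u ≤ ∫ u in Ioc 0 T, E :=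
          setIntegral_mono_on (hint.mono_set Ioc_subset_Ioi_self)
            (integrableOn_const measure_Ioc_lt_top.ne) measurableSet_Ioc hE
      _ = T * E := by simp [hT]
  · calc ∫ u in Ioi T, h u ≤ ∫ u in Ioi T, B * Real.exp (-u) :=
          setIntegral_mono_on (hint.mono_set (Ioi_subset_Ioi hT)) (hexp.const_mul B)
            measurableSet_Ioi hB
      _ = B * Real.exp (-T) := by rw [integral_const_mul, integral_exp_neg_Ioi]

theorem exp_mul_mul_le_mul_exp_neg {a b u y B : ℝ} (hb : b ≤ a) (hu : 0 ≤ u) (hy₀ : 0 ≤ y)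
    (hy : y ≤ B * Real.exp (-(a + 1) * u)) : Real.exp (b * u) * y ≤ B * Real.exp (-u) :=
  calc Real.exp (b * u) * y ≤ Real.exp (a * u) * (B * Real.exp (-(a + 1) * u)) := by gcongr
    _ = B * Real.exp (-u) := by
        rw [mul_left_comm, ← Real.exp_add]
        ring_nf

theorem norm_integral_cexp_sub_integral_cexp_le {μ ν : Measure ℝ} [IsFiniteMeasure μ]
    [IsFiniteMeasure ν] (hμ : ∀ᵐ t ∂μ, 0 ≤ t) (hν : ∀ᵐ t ∂ν, 0 ≤ t)
    (huniv : μ.real univ = ν.real univ) {a B ε : ℝ}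
    (hμB : ∀ u, 0 ≤ u → μ.real (Ioi u) ≤ B * Real.exp (-(a + 1) * u))
    (hνB : ∀ u, 0 ≤ u → ν.real (Ioi u) ≤ B * Real.exp (-(a + 1) * u))
    (hε : ∀ u, |μ.real (Iic u) - ν.real (Iic u)| ≤ ε) (ha : 0 ≤ a) {s : ℂ} (hs : s.re ≤ a)
    {T : ℝ} (hT : 0 ≤ T) :
    ‖∫ t, cexp (s * t) ∂μ - ∫ t, cexp (s * t) ∂ν‖ ≤
      ‖s‖ * (T * (Real.exp (a * T) * ε) + B * Real.exp (-T)) := by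
  have hμint := integrableOn_measureReal_Ioi_smul_cexp fun u hu =>
    exp_mul_mul_le_mul_exp_neg hs (le_of_lt hu) measureReal_nonneg (hμB u (le_of_lt hu))
  have hνint := integrableOn_measureReal_Ioi_smul_cexp fun u hu =>
    exp_mul_mul_le_mul_exp_neg hs (le_of_lt hu) measureReal_nonneg (hνB u (le_of_lt hu))
  set D : ℝ → ℝ := fun u => μ.real (Ioi u) - ν.real (Ioi u)
  have hD_int : IntegrableOn (fun u : ℝ => D u • cexp (s * u)) (Ioi 0) :=
    (hμint.sub hνint).congr_fun (fun u _ => by simp [D, sub_smul]) measurableSet_Ioi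
  have hD_abs : ∀ u, |D u| = |μ.real (Iic u) - ν.real (Iic u)| := fun u => by
    rw [abs_sub_comm]
    simp only [← compl_Iic, measureReal_compl measurableSet_Iic, huniv]
    ring_nf
  have hdiff : ∫ t, cexp (s * t) ∂μ - ∫ t, cexp (s * t) ∂ν =
      s * ∫ u in Ioi 0, D u • cexp (s * u) := by
    rw [integral_cexp_mul_eq_measureReal_univ_add hμ hμint,
      integral_cexp_mul_eq_measureReal_univ_add hν hνint, huniv]
    simp only [D, sub_smul, integral_sub hμint hνint]
    ring
  rw [hdiff, norm_mul]
  gcongr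
  refine (norm_integral_le_integral_norm _).trans <|
    setIntegral_Ioi_le_of_le_of_le_mul_exp_neg hD_int.norm hT (fun u hu => ?_) (fun u hu => ?_)
  · rw [norm_smul_cexp_mul, hD_abs]
    have hexp : Real.exp (s.re * u) ≤ Real.exp (a * T) :=
      Real.exp_le_exp.mpr (by nlinarith [hu.1, hu.2])
    exact mul_le_mul hexp (hε u) (abs_nonneg _) (Real.exp_pos _).le
  · have hu₀ : 0 ≤ u := hT.trans (le_of_lt hu)
    rw [norm_smul_cexp_mul]
    exact exp_mul_mul_le_mul_exp_neg hs hu₀ (abs_nonneg _) (abs_sub_le_of_nonneg_of_le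
      measureReal_nonneg (hμB u hu₀) measureReal_nonneg (hνB u hu₀))

theorem exp_neg_max_le_rpow {L A : ℝ} (hL : 0 < L) :
    Real.exp (-max 0 (2 * A * Real.log L)) ≤ L ^ (-(2 * A)) := by
  rw [Real.rpow_def_of_pos hL, Real.exp_le_exp]
  linarith [le_max_right 0 (2 * A * Real.log L)]

theorem max_mul_exp_mul_rpow_le {L A a : ℝ} (hL : 0 < L) (hA : 0 ≤ A) :
    max 0 (2 * A * Real.log L) *
        (Real.exp (a * max 0 (2 * A * Real.log L)) * L ^ (-(2 * A * a + 2 * A + 1))) ≤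
      2 * A * L ^ (-(2 * A)) := by
  rw [Real.rpow_def_of_pos hL, Real.rpow_def_of_pos hL]
  set ℓ := Real.log L
  rcases le_total ℓ 0 with hℓ | hℓ
  · rw [max_eq_left (by nlinarith)]
    simp only [zero_mul]
    positivity
  · rw [max_eq_right (by positivity)]
    -- `ℓ e^{-ℓ} ≤ 1` absorbs the factor `T = 2Aℓ` coming from the length of `(0, T]`
    have hℓexp : ℓ * Real.exp (-ℓ) ≤ 1 :=
      calc ℓ * Real.exp (-ℓ) ≤ Real.exp ℓ * Real.exp (-ℓ) := by
            gcongr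
            linarith [Real.add_one_le_exp ℓ]
        _ = 1 := by rw [← Real.exp_add, add_neg_cancel, Real.exp_zero]
    have hexp : Real.exp (a * (2 * A * ℓ)) * Real.exp (ℓ * -(2 * A * a + 2 * A + 1)) =
        Real.exp (-ℓ) * Real.exp (ℓ * -(2 * A)) := by
      rw [← Real.exp_add, ← Real.exp_add]
      ring_nf
    calc 2 * A * ℓ * (Real.exp (a * (2 * A * ℓ)) * Real.exp (ℓ * -(2 * A * a + 2 * A + 1)))
        = 2 * A * (ℓ * Real.exp (-ℓ)) * Real.exp (ℓ * -(2 * A)) := by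
          rw [hexp]
          ring
      _ ≤ 2 * A * 1 * Real.exp (ℓ * -(2 * A)) := by gcongr
      _ = 2 * A * Real.exp (ℓ * -(2 * A)) := by ring

theorem le_of_forall_le_add_mul_log_rpow_neg_one {a b c : ℝ}
    (h : ∀ x : ℝ, 2 ≤ x → a ≤ b + c * Real.log x ^ (-(1 : ℝ))) : a ≤ b := by
  have hlim : Tendsto (fun x : ℝ => b + c * Real.log x ^ (-(1 : ℝ))) atTop (nhds (b + c * 0)) :=
    tendsto_const_nhds.add <|
      ((tendsto_rpow_neg_atTop one_pos).comp Real.tendsto_log_atTop).const_mul c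
  simpa using ge_of_tendsto hlim (eventually_atTop.mpr ⟨2, h⟩)

theorem card_primesBelow_pos {x : ℝ} (hx : 2 ≤ x) : 0 < (primesBelow x).card :=
  Finset.card_pos.mpr ⟨2, Finset.mem_filter.mpr
    ⟨Finset.mem_range.mpr (Nat.lt_succ_of_le (Nat.le_floor (by exact_mod_cast hx))),
      Nat.prime_two⟩⟩

def primeValueMeasure (f : ℕ → ℝ) (x : ℝ) : Measure ℝ :=
  ∑ p ∈ primesBelow x, Measure.dirac (f p)

section PrimeValueMeasure

variable {f : ℕ → ℝ} {x : ℝ}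

instance : IsFiniteMeasure (primeValueMeasure f x) := by
  unfold primeValueMeasure
  infer_instance

open Classical in
theorem primeValueMeasure_real_apply {S : Set ℝ} (hS : MeasurableSet S) :
    (primeValueMeasure f x).real S = ((primesBelow x).filter fun p => f p ∈ S).card := by
  simp [primeValueMeasure, measureReal_def, Measure.finsetSum_apply, Measure.dirac_apply' _ hS,
    indicator_apply, Finset.sum_boole]

theorem integral_primeValueMeasure (g : ℝ → ℂ) :
    ∫ t, g t ∂primeValueMeasure f x = ∑ p ∈ primesBelow x, g (f p) := by
  rw [primeValueMeasure, integral_finsetSum_measure fun p _ => integrable_dirac enorm_lt_top]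
  simp only [integral_dirac]

theorem primeValueMeasure_ae_nonneg (hf : ∀ p, p.Prime → 0 ≤ f p) :
    ∀ᵐ t ∂primeValueMeasure f x, 0 ≤ t := by
  rw [ae_iff]
  simp only [not_le, primeValueMeasure, Measure.finsetSum_apply]
  refine Finset.sum_eq_zero fun p hp => ?_
  rw [Measure.dirac_apply, indicator_of_notMem]
  exact not_lt.mpr (hf p (Finset.mem_filter.mp hp).2)

theorem primeValueMeasure_real_Ioi_le {c b : ℝ}
    (htail : ∀ t : ℝ, 0 ≤ t → (((primesBelow x).filter fun p => t ≤ f p).card : ℝ) ≤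
      c * Real.exp (-b * t) * ((primesBelow x).card : ℝ)) {u : ℝ} (hu : 0 ≤ u) :
    (primeValueMeasure f x).real (Ioi u) ≤ (primesBelow x).card * c * Real.exp (-b * u) := by
  rw [primeValueMeasure_real_apply measurableSet_Ioi]
  calc (((primesBelow x).filter fun p => f p ∈ Ioi u).card : ℝ)
      ≤ ((primesBelow x).filter fun p => u ≤ f p).card := by
        gcongr with p
        exact fun h => le_of_lt h
    _ ≤ _ := (htail u hu).trans_eq (by ring)

end PrimeValueMeasure

namespace InClassC

variable {f : ℕ → ℝ} {Ψ : StieltjesFunction ℝ}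

theorem nonneg (hf : InClassC f Ψ) (t : ℝ) : 0 ≤ Ψ t :=
  le_of_tendsto hf.distrib.1 (eventually_atBot.mpr ⟨t, fun _ hs => Ψ.mono hs⟩)

theorem isProbabilityMeasure (hf : InClassC f Ψ) : IsProbabilityMeasure Ψ.measure :=
  Ψ.isProbabilityMeasure hf.distrib.1 hf.distrib.2

theorem measureReal_Iic (hf : InClassC f Ψ) (u : ℝ) : Ψ.measure.real (Iic u) = Ψ u := by
  rw [measureReal_def, Ψ.measure_Iic hf.distrib.1, sub_zero, ENNReal.toReal_ofReal (hf.nonneg u)]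

theorem measureReal_Ioi (hf : InClassC f Ψ) (u : ℝ) : Ψ.measure.real (Ioi u) = 1 - Ψ u := by
  have := hf.isProbabilityMeasure
  rw [← compl_Iic, measureReal_compl measurableSet_Iic, probReal_univ, hf.measureReal_Iic]

-- `Ψ` is the limit of the empirical distribution functions, which vanish on `(-∞, 0)`.
theorem eq_zero_of_neg (hf : InClassC f Ψ) {t : ℝ} (ht : t < 0) : Ψ t = 0 := by
  obtain ⟨c, -, happrox⟩ := hf.approx 1 one_pos
  refine le_antisymm (le_of_forall_le_add_mul_log_rpow_neg_one (c := c) fun x hx => ?_)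
    (hf.nonneg t)
  have hempty : (primesBelow x).filter (fun p => f p ≤ t) = ∅ :=
    Finset.filter_eq_empty_iff.mpr fun p hp =>
      not_le.mpr (ht.trans (hf.pos p (Finset.mem_filter.mp hp).2))
  have := happrox x hx t
  rw [hempty, Finset.card_empty, Nat.cast_zero, zero_div, zero_sub, abs_neg] at this
  linarith [le_abs_self (Ψ t)]

theorem ae_nonneg (hf : InClassC f Ψ) : ∀ᵐ t ∂Ψ.measure, 0 ≤ t := by
  have hleft : Function.leftLim Ψ 0 = 0 :=
    leftLim_eq_of_tendsto (tendsto_const_nhds.congr' <|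
      eventuallyEq_nhdsWithin_of_eqOn fun t ht => (hf.eq_zero_of_neg ht).symm)
  have hIio : Ψ.measure (Iio 0) = 0 := by
    rw [Ψ.measure_Iio hf.distrib.1, hleft, sub_zero, ENNReal.ofReal_zero]
  rw [ae_iff]
  simp only [not_le]
  exact hIio

theorem one_sub_le_of_tail (hf : InClassC f Ψ) {b c : ℝ}
    (htail : ∀ x : ℝ, 2 ≤ x → ∀ t : ℝ, 0 ≤ t →
      (((primesBelow x).filter fun p => t ≤ f p).card : ℝ) ≤
        c * Real.exp (-b * t) * ((primesBelow x).card : ℝ))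
    {t : ℝ} (ht : 0 ≤ t) : 1 - Ψ t ≤ c * Real.exp (-b * t) := by
  obtain ⟨c₁, -, happrox⟩ := hf.approx 1 one_pos
  refine le_of_forall_le_add_mul_log_rpow_neg_one (c := c₁) fun x hx => ?_
  set μ := primeValueMeasure f x
  have hn : (0 : ℝ) < (primesBelow x).card := by exact_mod_cast card_primesBelow_pos hx
  have huniv : μ.real univ = (primesBelow x).card := by
    simp [μ, primeValueMeasure_real_apply MeasurableSet.univ]
  have hIic : μ.real (Iic t) = ((primesBelow x).filter fun p => f p ≤ t).card := by
    simp [μ, primeValueMeasure_real_apply measurableSet_Iic]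
  have hIoi := primeValueMeasure_real_Ioi_le (htail x hx) ht
  rw [← compl_Iic, measureReal_compl measurableSet_Iic, huniv, hIic] at hIoi
  have hfrac : 1 - (((primesBelow x).filter fun p => f p ≤ t).card : ℝ) / (primesBelow x).card
      ≤ c * Real.exp (-b * t) := by
    rw [one_sub_div hn.ne', div_le_iff₀ hn]
    linarith
  linarith [(abs_le.mp (happrox x hx t)).2]

theorem norm_sum_cexp_sub_card_mul_psiHatC_le (hf : InClassC f Ψ) {a c ck k x : ℝ}
    (ha : 0 ≤ a)
    (htail : ∀ x : ℝ, 2 ≤ x → ∀ t : ℝ, 0 ≤ t →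
      (((primesBelow x).filter fun p => t ≤ f p).card : ℝ) ≤
        c * Real.exp (-(a + 1) * t) * ((primesBelow x).card : ℝ))
    (happrox : ∀ t : ℝ, |(((primesBelow x).filter fun p => f p ≤ t).card : ℝ) /
      ((primesBelow x).card : ℝ) - Ψ t| ≤ ck * Real.log x ^ (-k))
    (hx : 2 ≤ x) {s : ℂ} (hs : s.re ≤ a) {T : ℝ} (hT : 0 ≤ T) :
    ‖(∑ p ∈ primesBelow x, cexp (s * f p)) - (primesBelow x).card * psiHatC Ψ s‖ ≤
      ‖s‖ * (T * (Real.exp (a * T) * ((primesBelow x).card * (ck * Real.log x ^ (-k)))) +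
        (primesBelow x).card * c * Real.exp (-T)) := by
  have := hf.isProbabilityMeasure
  set n := (primesBelow x).card
  have hn : (0 : ℝ) < n := by exact_mod_cast card_primesBelow_pos hx
  set μ := primeValueMeasure f x
  set ν := (n : ℝ≥0) • Ψ.measure
  have hμ_int : ∑ p ∈ primesBelow x, cexp (s * f p) = ∫ t, cexp (s * t) ∂μ :=
    (integral_primeValueMeasure fun t : ℝ => cexp (s * t)).symm
  have hν_int : (n : ℂ) * psiHatC Ψ s = ∫ t, cexp (s * t) ∂ν := by
    simp [ν, integral_smul_nnreal_measure, psiHatC, NNReal.smul_def, Complex.real_smul]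
  have hμ_Iic : ∀ u, μ.real (Iic u) = ((primesBelow x).filter fun p => f p ≤ u).card :=
    fun u => by simp [μ, primeValueMeasure_real_apply measurableSet_Iic]
  rw [hμ_int, hν_int]
  refine norm_integral_cexp_sub_integral_cexp_le
    (primeValueMeasure_ae_nonneg fun p hp => (hf.pos p hp).le)
    (Measure.ae_smul_measure hf.ae_nonneg _) ?_
    (fun u hu => primeValueMeasure_real_Ioi_le (htail x hx) hu) (fun u hu => ?_) (fun u => ?_)
    ha hs hT
  · simp [n, primeValueMeasure_real_apply MeasurableSet.univ]
  · rw [measureReal_nnreal_smul_apply, NNReal.coe_natCast, hf.measureReal_Ioi, mul_assoc]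
    gcongr
    exact hf.one_sub_le_of_tail htail hu
  · rw [measureReal_nnreal_smul_apply, NNReal.coe_natCast, hf.measureReal_Iic, hμ_Iic]
    have hscale : (((primesBelow x).filter fun p => f p ≤ u).card : ℝ) - n * Ψ u =
        n * ((((primesBelow x).filter fun p => f p ≤ u).card : ℝ) / n - Ψ u) := by
      field_simp
    rw [hscale, abs_mul, abs_of_pos hn]
    exact mul_le_mul_of_nonneg_left (happrox u) hn.le

end InClassC

/-- Lemma 4.3: uniformly in `|Re s| ≤ C₀`,
`Σ_{p ≤ x} e^{s f(p)} = π(x)·(Ψ̂_f(s) + O_{A,C₀}((1 + |Im s|)·(log x)^{−2A}))`. -/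
theorem stmt15 (f : ℕ → ℝ) (Ψ : StieltjesFunction ℝ) (hf : InClassC f Ψ)
    (A C₀ : ℝ) (hA : 0 < A) (hC₀ : 0 < C₀) :
    ∃ K : ℝ, 0 < K ∧ ∀ x : ℝ, 2 ≤ x → ∀ s : ℂ, |s.re| ≤ C₀ →
      ‖(∑ p ∈ primesBelow x, Complex.exp (s * (f p : ℂ))) -
          ((primesBelow x).card : ℂ) * psiHatC Ψ s‖
        ≤ K * ((primesBelow x).card : ℝ) * (1 + |s.im|) * Real.log x ^ (-(2 * A)) := by
  obtain ⟨c, hc, htail⟩ := hf.tail (C₀ + 1) (by linarith)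
  obtain ⟨ck, hck, happrox⟩ := hf.approx (2 * A * C₀ + 2 * A + 1) (by positivity)
  refine ⟨(C₀ + 1) * (2 * A * ck + c), by positivity, fun x hx s hs => ?_⟩
  have hL : 0 < Real.log x := Real.log_pos (by linarith)
  have hs_norm : ‖s‖ ≤ (C₀ + 1) * (1 + |s.im|) := by
    nlinarith [Complex.norm_le_abs_re_add_abs_im s, abs_nonneg s.im]
  have hsplit := hf.norm_sum_cexp_sub_card_mul_psiHatC_le hC₀.le htail (happrox x hx) hx
    (le_of_abs_le hs) (le_max_left 0 (2 * A * Real.log (Real.log x)))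
  have hnear := max_mul_exp_mul_rpow_le (a := C₀) hL hA.le
  have hfar := exp_neg_max_le_rpow (A := A) hL
  set T := max 0 (2 * A * Real.log (Real.log x))
  set n : ℝ := ((primesBelow x).card : ℝ)
  set L := Real.log x
  have hbracket : T * (Real.exp (C₀ * T) * (n * (ck * L ^ (-(2 * A * C₀ + 2 * A + 1))))) +
      n * c * Real.exp (-T) ≤ n * ck * (2 * A * L ^ (-(2 * A))) + n * c * L ^ (-(2 * A)) := by
    rw [show T * (Real.exp (C₀ * T) * (n * (ck * L ^ (-(2 * A * C₀ + 2 * A + 1))))) =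
      n * ck * (T * (Real.exp (C₀ * T) * L ^ (-(2 * A * C₀ + 2 * A + 1)))) by ring]
    gcongr
  calc _ ≤ _ := hsplit
    _ ≤ (C₀ + 1) * (1 + |s.im|) * (n * ck * (2 * A * L ^ (-(2 * A))) + n * c * L ^ (-(2 * A))) :=
        mul_le_mul hs_norm hbracket (by positivity) (by positivity)
    _ = _ := by ring
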